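/- Let t > 1 and partition the task indices {1, …, t} into two disjoint sets B (tasks whose source distribution is refined exactly once) and B' (tasks retrained more than once), with each task i ∈ B' assigned a retraining count b̂_i ≥ 1 (the task was retrained b̂_i − 1 times). For each i ∈ B, let μ_i be its target marginal with true labeling f_i, ν_i its once-refined source marginal with labeling g_i, h_i ∈ H a minimizer of R(·, μ_i, f_i) over H, and h̃_i ∈ H a minimizer of R(·, ν_i, g_i) over H. For each i ∈ B', let μ_i^{(0)}, …, μ_i^{(b̂_i)} be the chain of marginals (μ_i^{(0)} the target marginal, μ_i^{(k)} the k-times-refined source marginal), with true labeling functions f_i^{(k)} and minimizers h_i^{(k)} ∈ H of R(·, μ_i^{(k)}, f_i^{(k)}) over H. Then for every classifier h ∈ H: Σ_{i=1}^{t} R(h, target of task i) ≤ Σ_{i ∈ B} [ R'(h, h̃_i, ν_i) + Ψ(μ_i, ν_i) + R'(f_i, h_i, μ_i) + R'(h_i, h̃_i, ν_i) ] + Σ_{i ∈ B'} [ R'(h, h_i^{(b̂_i)}, μ_i^{(b̂_i)}) + Σ_{k=0}^{b̂_i−1} ( Ψ(μ_i^{(k)}, μ_i^{(k+1)}) + R'(h_i^{(k)},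 f_i^{(k)}, μ_i^{(k)}) + R'(h_i^{(k)}, h_i^{(k+1)}, μ_i^{(k+1)}) ) ]; the right-hand side is the mixture-model risk bound R_mixture. -/

import Mathlib

/-!
The target risk of each task is bounded by a chain of elementary moves: the triangle
inequality for the loss, integrated against a finite measure, replaces the labeling
function by a hypothesis of `H`, and the discrepancy distance pays for moving the risk of
a pair of hypotheses from one marginal to the next. A task refined once needs one such
move; a task retrained `b̂` times telescopes along its chain of marginals.
-/

open MeasureTheory Finset

/-- `R'(f, g, μ) = ∫ τ(f(x), g(x)) dμ(x)`. -/
noncomputable def Rp {X Y : Type*} [MeasurableSpace X] (τ : Y → Y → ℝ)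
    (f g : X → Y) (μ : Measure X) : ℝ := ∫ x, τ (f x) (g x) ∂μ

/-- Discrepancy distance `Ψ(μ, ν)` w.r.t. loss `τ` and hypothesis class `H`. -/
noncomputable def disc {X Y : Type*} [MeasurableSpace X] (τ : Y → Y → ℝ)
    (H : Set (X → Y)) (μ ν : Measure X) : ℝ :=
  sSup {r : ℝ | ∃ h ∈ H, ∃ h' ∈ H,
    r = |(∫ x, τ (h' x) (h x) ∂μ) - ∫ x, τ (h' x) (h x) ∂ν|}

def LossMeasurableOn {X Y : Type*} [MeasurableSpace X] (τ : Y → Y → ℝ)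
    (S : Set (X → Y)) : Prop :=
  ∀ p ∈ S, ∀ q ∈ S, Measurable fun x => τ (p x) (q x)

section

variable {X Y : Type*} [MeasurableSpace X] {τ : Y → Y → ℝ} {M' : ℝ}

lemma Rp_nonneg (hnonneg : ∀ y y', 0 ≤ τ y y') (p q : X → Y) (μ : Measure X) :
    0 ≤ Rp τ p q μ :=
  integral_nonneg fun _ => hnonneg _ _

lemma Rp_comm (hsym : ∀ y y', τ y y' = τ y' y) (p q : X → Y) (μ : Measure X) :
    Rp τ p q μ = Rp τ q p μ := by
  simp only [Rp, hsym (p _)]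

lemma abs_Rp_le (hbound : ∀ y y', |τ y y'| ≤ M') (p q : X → Y) (μ : Measure X)
    [IsFiniteMeasure μ] : |Rp τ p q μ| ≤ M' * μ.real Set.univ :=
  norm_integral_le_of_norm_le_const (f := fun x => τ (p x) (q x))
    (Filter.Eventually.of_forall fun _ => hbound _ _)

lemma abs_Rp_sub_Rp_le_disc (hbound : ∀ y y', |τ y y'| ≤ M') {H : Set (X → Y)}
    {p q : X → Y} (hp : p ∈ H) (hq : q ∈ H) (μ ν : Measure X)
    [IsFiniteMeasure μ] [IsFiniteMeasure ν] :
    |Rp τ p q μ - Rp τ p q ν| ≤ disc τ H μ ν := by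
  refine le_csSup ⟨M' * μ.real Set.univ + M' * ν.real Set.univ, ?_⟩ ⟨q, hq, p, hp, rfl⟩
  rintro _ ⟨a, -, b, -, rfl⟩
  exact (abs_sub _ _).trans (add_le_add (abs_Rp_le hbound b a μ) (abs_Rp_le hbound b a ν))

lemma Rp_le_Rp_add_disc (hbound : ∀ y y', |τ y y'| ≤ M') {H : Set (X → Y)}
    {p q : X → Y} (hp : p ∈ H) (hq : q ∈ H) (μ ν : Measure X)
    [IsFiniteMeasure μ] [IsFiniteMeasure ν] :
    Rp τ p q μ ≤ Rp τ p q ν + disc τ H μ ν := by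
  linarith [le_abs_self (Rp τ p q μ - Rp τ p q ν), abs_Rp_sub_Rp_le_disc hbound hp hq μ ν]

lemma integrable_loss (hbound : ∀ y y', |τ y y'| ≤ M') {p q : X → Y} (μ : Measure X)
    [IsFiniteMeasure μ] (hm : Measurable fun x => τ (p x) (q x)) :
    Integrable (fun x => τ (p x) (q x)) μ :=
  .of_bound hm.aestronglyMeasurable M' (Filter.Eventually.of_forall fun _ => hbound _ _)

lemma Rp_le_Rp_add_Rp (htri : ∀ y y' y'', τ y y'' ≤ τ y y' + τ y' y'')
    (hbound : ∀ y y', |τ y y'| ≤ M') {S : Set (X → Y)} (hS : LossMeasurableOn τ S)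
    {p q r : X → Y} (hp : p ∈ S) (hq : q ∈ S) (hr : r ∈ S) (μ : Measure X)
    [IsFiniteMeasure μ] :
    Rp τ p r μ ≤ Rp τ p q μ + Rp τ q r μ := by
  have hpq := integrable_loss hbound μ (hS p hp q hq)
  have hqr := integrable_loss hbound μ (hS q hq r hr)
  rw [Rp, Rp, Rp, ← integral_add hpq hqr]
  exact integral_mono (integrable_loss hbound μ (hS p hp r hr)) (hpq.add hqr)
    fun _ => htri _ _ _

lemma Rp_le_of_refinedOnce (hsym : ∀ y y', τ y y' = τ y' y)
    (htri : ∀ y y' y'', τ y y'' ≤ τ y y' + τ y' y'') (hbound : ∀ y y', |τ y y'| ≤ M')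
    {H S : Set (X → Y)} (hS : LossMeasurableOn τ S) (hHS : H ⊆ S)
    {h f c c' : X → Y} (hh : h ∈ H) (hf : f ∈ S) (hc : c ∈ H) (hc' : c' ∈ H)
    (μ ν : Measure X) [IsFiniteMeasure μ] [IsFiniteMeasure ν] :
    Rp τ h f μ ≤ Rp τ h c' ν + disc τ H μ ν + (Rp τ f c μ + Rp τ c c' ν) :=
  calc Rp τ h f μ
      ≤ Rp τ h c μ + Rp τ f c μ := by
        rw [Rp_comm hsym f c]
        exact Rp_le_Rp_add_Rp htri hbound hS (hHS hh) (hHS hc) hf μ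
    _ ≤ Rp τ h c ν + disc τ H μ ν + Rp τ f c μ := by
        gcongr; exact Rp_le_Rp_add_disc hbound hh hc μ ν
    _ ≤ Rp τ h c' ν + Rp τ c c' ν + disc τ H μ ν + Rp τ f c μ := by
        rw [Rp_comm hsym c c']
        gcongr; exact Rp_le_Rp_add_Rp htri hbound hS (hHS hh) (hHS hc') (hHS hc) ν
    _ = Rp τ h c' ν + disc τ H μ ν + (Rp τ f c μ + Rp τ c c' ν) := by ring

lemma Rp_le_chain (hsym : ∀ y y', τ y y' = τ y' y)
    (htri : ∀ y y' y'', τ y y'' ≤ τ y y' + τ y' y'') (hbound : ∀ y y', |τ y y'| ≤ M')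
    {H S : Set (X → Y)} (hS : LossMeasurableOn τ S) (hHS : H ⊆ S)
    {h : X → Y} (hh : h ∈ H) {μ : ℕ → Measure X} {c : ℕ → X → Y} {n : ℕ}
    (hμ : ∀ k ≤ n, IsFiniteMeasure (μ k)) (hc : ∀ k ≤ n, c k ∈ H) :
    Rp τ h (c 0) (μ 0) ≤ Rp τ h (c n) (μ n) +
      ∑ k ∈ range n, (disc τ H (μ k) (μ (k + 1)) + Rp τ (c k) (c (k + 1)) (μ (k + 1))) := by
  induction n with
  | zero => simp
  | succ n ih =>
    have := hμ n n.le_succ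
    have := hμ (n + 1) le_rfl
    have step : Rp τ h (c n) (μ n) ≤ Rp τ h (c (n + 1)) (μ (n + 1)) +
        (disc τ H (μ n) (μ (n + 1)) + Rp τ (c n) (c (n + 1)) (μ (n + 1))) := by
      have hmove := Rp_le_Rp_add_disc hbound hh (hc n n.le_succ) (μ n) (μ (n + 1))
      have hswap := Rp_le_Rp_add_Rp htri hbound hS (hHS hh) (hHS (hc (n + 1) le_rfl))
        (hHS (hc n n.le_succ)) (μ (n + 1))
      rw [Rp_comm hsym (c (n + 1))] at hswap
      linarith
    rw [sum_range_succ]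
    linarith [ih (fun k hk => hμ k (by omega)) (fun k hk => hc k (by omega))]

lemma Rp_le_of_retrained (hnonneg : ∀ y y', 0 ≤ τ y y') (hsym : ∀ y y', τ y y' = τ y' y)
    (htri : ∀ y y' y'', τ y y'' ≤ τ y y' + τ y' y'') (hbound : ∀ y y', |τ y y'| ≤ M')
    {H S : Set (X → Y)} (hS : LossMeasurableOn τ S) (hHS : H ⊆ S)
    {h : X → Y} (hh : h ∈ H) {μ : ℕ → Measure X} {c f : ℕ → X → Y} {n : ℕ} (hn : 1 ≤ n)
    (hμ : ∀ k ≤ n, IsFiniteMeasure (μ k)) (hc : ∀ k ≤ n, c k ∈ H) (hf : f 0 ∈ S) :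
    Rp τ h (f 0) (μ 0) ≤ Rp τ h (c n) (μ n) +
      ∑ k ∈ range n, (disc τ H (μ k) (μ (k + 1)) +
        (Rp τ (c k) (f k) (μ k) + Rp τ (c k) (c (k + 1)) (μ (k + 1)))) := by
  have := hμ 0 n.zero_le
  have hfirst : Rp τ h (f 0) (μ 0) ≤ Rp τ h (c 0) (μ 0) + Rp τ (c 0) (f 0) (μ 0) :=
    Rp_le_Rp_add_Rp htri hbound hS (hHS hh) (hHS (hc 0 n.zero_le)) hf (μ 0)
  have hlabel : Rp τ (c 0) (f 0) (μ 0) ≤ ∑ k ∈ range n, Rp τ (c k) (f k) (μ k) :=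
    single_le_sum (f := fun k => Rp τ (c k) (f k) (μ k))
      (fun _ _ => Rp_nonneg hnonneg _ _ _) (mem_range.2 hn)
  rw [sum_congr rfl fun _ _ => add_left_comm _ _ _, sum_add_distrib]
  linarith [Rp_le_chain hsym htri hbound hS hHS hh hμ hc]

end

theorem mixture_risk_bound_general {X Y : Type*} [MeasurableSpace X]
    (τ : Y → Y → ℝ) (M' : ℝ)
    (hbd : ∀ y y' : Y, 0 ≤ τ y y' ∧ τ y y' ≤ M')
    (hsym : ∀ y y' : Y, τ y y' = τ y' y)
    (htri : ∀ y y' y'' : Y, τ y y'' ≤ τ y y' + τ y' y'')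
    (H : Set (X → Y))
    (B B' : Finset ℕ)
    (bhat : ℕ → ℕ) (hbhat : ∀ i ∈ B', 1 ≤ bhat i)
    -- data for the tasks in `B` (refined exactly once)
    (μ ν : ℕ → Measure X)
    (hprobμ : ∀ i ∈ B, IsProbabilityMeasure (μ i))
    (hprobν : ∀ i ∈ B, IsProbabilityMeasure (ν i))
    (f g : ℕ → X → Y) (hc htc : ℕ → X → Y)
    (hcH : ∀ i ∈ B, hc i ∈ H)
    (htcH : ∀ i ∈ B, htc i ∈ H)
    -- data for the tasks in `B'` (retrained more than once): chains of refinements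
    (μ' : ℕ → ℕ → Measure X)
    (hprobμ' : ∀ i ∈ B', ∀ k ≤ bhat i, IsProbabilityMeasure (μ' i k))
    (f' : ℕ → ℕ → X → Y) (hc' : ℕ → ℕ → X → Y)
    (hc'H : ∀ i ∈ B', ∀ k ≤ bhat i, hc' i k ∈ H)
    (hMeas : ∀ p q : X → Y,
      (p ∈ H ∨ (∃ i, p = f i) ∨ (∃ i, p = g i) ∨ (∃ i k, p = f' i k)) →
      (q ∈ H ∨ (∃ i, q = f i) ∨ (∃ i, q = g i) ∨ (∃ i k, q = f' i k)) →
      Measurable fun x => τ (p x) (q x))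
    (h : X → Y) (hhH : h ∈ H) :
    ((∑ i ∈ B, Rp τ h (f i) (μ i)) + ∑ i ∈ B', Rp τ h (f' i 0) (μ' i 0)) ≤
      (∑ i ∈ B,
        (Rp τ h (htc i) (ν i) + disc τ H (μ i) (ν i) +
          (Rp τ (f i) (hc i) (μ i) + Rp τ (hc i) (htc i) (ν i)))) +
      ∑ i ∈ B',
        (Rp τ h (hc' i (bhat i)) (μ' i (bhat i)) +
          ∑ k ∈ Finset.range (bhat i),
            (disc τ H (μ' i k) (μ' i (k + 1)) +
              (Rp τ (hc' i k) (f' i k) (μ' i k) +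
                Rp τ (hc' i k) (hc' i (k + 1)) (μ' i (k + 1))))) := by
  have hnonneg : ∀ y y' : Y, 0 ≤ τ y y' := fun y y' => (hbd y y').1
  have hbound : ∀ y y' : Y, |τ y y'| ≤ M' := fun y y' =>
    abs_le.2 ⟨by linarith [hbd y y'], (hbd y y').2⟩
  set S : Set (X → Y) :=
    {p | p ∈ H ∨ (∃ i, p = f i) ∨ (∃ i, p = g i) ∨ (∃ i k, p = f' i k)}
  have hS : LossMeasurableOn τ S := fun p hp q hq => hMeas p q hp hq
  have hHS : H ⊆ S := fun _ => Or.inl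
  refine add_le_add (sum_le_sum fun i hi => ?_) (sum_le_sum fun i hi => ?_)
  · have := hprobμ i hi
    have := hprobν i hi
    exact Rp_le_of_refinedOnce hsym htri hbound hS hHS hhH (Or.inr (Or.inl ⟨i, rfl⟩))
      (hcH i hi) (htcH i hi) (μ i) (ν i)
  · have hμ' : ∀ k ≤ bhat i, IsFiniteMeasure (μ' i k) := fun k hk =>
      have := hprobμ' i hi k hk
      inferInstance
    exact Rp_le_of_retrained hnonneg hsym htri hbound hS hHS hhH (hbhat i hi) hμ'
      (hc'H i hi) (Or.inr (Or.inr (Or.inr ⟨i, 0, rfl⟩)))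

/-- Lemma 3: mixture-model risk bound `R_mixture` where the tasks are
partitioned into a set `B` of tasks refined exactly once and a set `B'` of tasks
retrained more than once, with retraining counts `bhat`. -/
theorem mixture_risk_bound {X Y : Type*} [MeasurableSpace X]
    (τ : Y → Y → ℝ) (M' : ℝ) (hM : 0 < M')
    (hbd : ∀ y y' : Y, 0 ≤ τ y y' ∧ τ y y' ≤ M')
    (hsym : ∀ y y' : Y, τ y y' = τ y' y)
    (htri : ∀ y y' y'' : Y, τ y y'' ≤ τ y y' + τ y' y'')
    (H : Set (X → Y)) (hH : H.Nonempty)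
    (t : ℕ) (ht : 1 < t)
    (B B' : Finset ℕ) (hdisj : Disjoint B B') (hunion : B ∪ B' = Finset.Icc 1 t)
    (bhat : ℕ → ℕ) (hbhat : ∀ i ∈ B', 1 ≤ bhat i)
    -- data for the tasks in `B` (refined exactly once)
    (μ ν : ℕ → Measure X)
    (hprobμ : ∀ i ∈ B, IsProbabilityMeasure (μ i))
    (hprobν : ∀ i ∈ B, IsProbabilityMeasure (ν i))
    (f g : ℕ → X → Y) (hc htc : ℕ → X → Y)
    (hcH : ∀ i ∈ B, hc i ∈ H)
    (hcMin : ∀ i ∈ B, ∀ h' ∈ H,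
      Rp τ (hc i) (f i) (μ i) ≤ Rp τ h' (f i) (μ i))
    (htcH : ∀ i ∈ B, htc i ∈ H)
    (htcMin : ∀ i ∈ B, ∀ h' ∈ H,
      Rp τ (htc i) (g i) (ν i) ≤ Rp τ h' (g i) (ν i))
    -- data for the tasks in `B'` (retrained more than once): chains of refinements
    (μ' : ℕ → ℕ → Measure X)
    (hprobμ' : ∀ i ∈ B', ∀ k ≤ bhat i, IsProbabilityMeasure (μ' i k))
    (f' : ℕ → ℕ → X → Y) (hc' : ℕ → ℕ → X → Y)
    (hc'H : ∀ i ∈ B', ∀ k ≤ bhat i, hc' i k ∈ H)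
    (hc'Min : ∀ i ∈ B', ∀ k ≤ bhat i, ∀ h' ∈ H,
      Rp τ (hc' i k) (f' i k) (μ' i k) ≤ Rp τ h' (f' i k) (μ' i k))
    (hMeas : ∀ p q : X → Y,
      (p ∈ H ∨ (∃ i, p = f i) ∨ (∃ i, p = g i) ∨ (∃ i k, p = f' i k)) →
      (q ∈ H ∨ (∃ i, q = f i) ∨ (∃ i, q = g i) ∨ (∃ i k, q = f' i k)) →
      Measurable fun x => τ (p x) (q x))
    (h : X → Y) (hhH : h ∈ H) :
    ((∑ i ∈ B, Rp τ h (f i) (μ i)) + ∑ i ∈ B', Rp τ h (f' i 0) (μ' i 0)) ≤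
      (∑ i ∈ B,
        (Rp τ h (htc i) (ν i) + disc τ H (μ i) (ν i) +
          (Rp τ (f i) (hc i) (μ i) + Rp τ (hc i) (htc i) (ν i)))) +
      ∑ i ∈ B',
        (Rp τ h (hc' i (bhat i)) (μ' i (bhat i)) +
          ∑ k ∈ Finset.range (bhat i),
            (disc τ H (μ' i k) (μ' i (k + 1)) +
              (Rp τ (hc' i k) (f' i k) (μ' i k) +
                Rp τ (hc' i k) (hc' i (k + 1)) (μ' i (k + 1))))) :=
  mixture_risk_bound_general τ M' hbd hsym htri H B B' bhat hbhat μ ν hprobμ hprobν f g hc htc hcH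
    htcH μ' hprobμ' f' hc' hc'H hMeas h hhH
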